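/- arXiv:0903.0813 — 3 statements merged into one kernel-verified Lean document; each statement's English description precedes it below -/
import Mathlib

section
/- For every infinite cardinal κ, the hedgehog with κ needles X = {(x_α)_{α<κ} ∈ [0,1]^κ : at most one coordinate x_α is nonzero}, with the subspace topology from the product [0,1]^κ, satisfies Sln(X) = c(X) = w(X) = κ. -/
open Set Cardinal TopologicalSpace Topology

universe u

/-- The Suslinian number of a continuum `X`: the supremum of the cardinalities of
pairwise disjoint families of non-degenerate subcontinua of `X`. -/
noncomputable def SlnC (X : Type u) [TopologicalSpace X] : Cardinal.{u} :=
  ⨆ 𝒞 : {𝒞 : Set (Set X) //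
      (∀ C ∈ 𝒞, IsCompact C ∧ IsConnected C ∧ C.Nontrivial) ∧ 𝒞.PairwiseDisjoint id},
    #(𝒞.1)

/-- The Suslinian number of a Tychonoff space `X`: the minimum of the Suslinian numbers
of continua containing a homeomorphic copy of `X`. -/
noncomputable def Sln (X : Type u) [TopologicalSpace X] : Cardinal.{u} :=
  sInf {κ : Cardinal.{u} | ∃ (Y : Type u) (_ : TopologicalSpace Y),
    CompactSpace Y ∧ T2Space Y ∧ ConnectedSpace Y ∧
    (∃ e : X → Y, IsEmbedding e) ∧ SlnC Y = κ}

/-- The weight of a topological space: the minimal cardinality of a base. -/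
noncomputable def tweight (X : Type u) [TopologicalSpace X] : Cardinal.{u} :=
  sInf {κ : Cardinal.{u} | ∃ B : Set (Set X), IsTopologicalBasis B ∧ #B = κ}

/-- The Suslin (cellularity) number: the supremum of the cardinalities of pairwise
disjoint families of non-empty open sets. -/
noncomputable def suslinNumber (X : Type u) [TopologicalSpace X] : Cardinal.{u} :=
  ⨆ 𝒰 : {𝒰 : Set (Set X) // (∀ U ∈ 𝒰, IsOpen U ∧ U.Nonempty) ∧ 𝒰.PairwiseDisjoint id},
    #(𝒰.1)

/-- The density of a space: the minimal cardinality of a dense subset. -/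
noncomputable def densityCard (X : Type u) [TopologicalSpace X] : Cardinal.{u} :=
  sInf {κ : Cardinal.{u} | ∃ D : Set X, Dense D ∧ #D = κ}

/-- The Lindelöf number of a space: the least `κ` such that every open cover admits a
subcover of cardinality at most `κ`. -/
noncomputable def lindelofNum (X : Type u) [TopologicalSpace X] : Cardinal.{u} :=
  sInf {κ : Cardinal.{u} | ∀ 𝒰 : Set (Set X), (∀ U ∈ 𝒰, IsOpen U) → ⋃₀ 𝒰 = Set.univ →
    ∃ 𝒱 ⊆ 𝒰, #𝒱 ≤ κ ∧ ⋃₀ 𝒱 = Set.univ}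

/-- The hereditary Lindelöf number: the supremum of the Lindelöf numbers of subspaces. -/
noncomputable def hLindelofNum (X : Type u) [TopologicalSpace X] : Cardinal.{u} :=
  ⨆ Y : Set X, lindelofNum ↥Y

/-- A space is zero-dimensional if it has a base of clopen sets. -/
def IsZeroDim (X : Type u) [TopologicalSpace X] : Prop :=
  ∃ B : Set (Set X), IsTopologicalBasis B ∧ ∀ U ∈ B, IsClopen U

/-- A continuum is Suslinian if every pairwise disjoint family of non-degenerate
subcontinua is countable. -/
def IsSuslinianSpace (X : Type u) [TopologicalSpace X] : Prop :=
  ∀ 𝒞 : Set (Set X), (∀ C ∈ 𝒞, IsCompact C ∧ IsConnected C ∧ C.Nontrivial) →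
    𝒞.PairwiseDisjoint id → 𝒞.Countable

/-- `T` is a `κ`-Suslin tree: a tree (the strict predecessors of each node are
well-ordered) of height `κ` having no chains and no antichains of cardinality `κ`. -/
def IsSuslinTree (κ : Cardinal.{u}) (T : Type u) [PartialOrder T] : Prop :=
  ∃ h : ∀ t : T, IsWellOrder {s : T // s < t} (· < ·),
    (⨆ t : T, Order.succ (@Ordinal.type {s : T // s < t} (· < ·) (h t))) = κ.ord ∧
    (∀ C : Set T, IsChain (· ≤ ·) C → #C < κ) ∧
    (∀ A : Set T, IsAntichain (· ≤ ·) A → #A < κ)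

/-- The rim-weight: the minimum over bases `B` of `sup_{U ∈ B} w(∂U)`. -/
noncomputable def rimWeight (X : Type u) [TopologicalSpace X] : Cardinal.{u} :=
  sInf {κ : Cardinal.{u} | ∃ B : Set (Set X), IsTopologicalBasis B ∧
    (⨆ U : B, tweight ↥(frontier (U : Set X))) = κ}

/-- The covering dimension of `X` is at most `n`: every finite open cover has a finite
open refinement in which no point belongs to more than `n + 1` members. -/
def CovDimLE (X : Type u) [TopologicalSpace X] (n : ℕ) : Prop :=
  ∀ 𝒰 : Set (Set X), (∀ U ∈ 𝒰, IsOpen U) → ⋃₀ 𝒰 = Set.univ → 𝒰.Finite →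
    ∃ 𝒱 : Set (Set X), 𝒱.Finite ∧ (∀ V ∈ 𝒱, IsOpen V) ∧ ⋃₀ 𝒱 = Set.univ ∧
      (∀ V ∈ 𝒱, ∃ U ∈ 𝒰, V ⊆ U) ∧
      ∀ x : X, {V ∈ 𝒱 | x ∈ V}.ncard ≤ n + 1

/-- The Vietoris topology on the collection of all subsets of `X`, generated by the sets
`{F | F ⊆ U}` and `{F | F ∩ U ≠ ∅}` for `U` open. -/
def vietorisTop (X : Type u) [TopologicalSpace X] : TopologicalSpace (Set X) :=
  TopologicalSpace.generateFrom
    (((fun U => {F : Set X | F ⊆ U}) '' {U : Set X | IsOpen U}) ∪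
     ((fun U => {F : Set X | (F ∩ U).Nonempty}) '' {U : Set X | IsOpen U}))

/-- The hyperspace `exp_c(X)` of subcontinua of `X` with the Vietoris topology. -/
def expc (X : Type u) [TopologicalSpace X] : Type u :=
  {C : Set X // IsCompact C ∧ IsConnected C}

instance expc.topologicalSpace (X : Type u) [TopologicalSpace X] :
    TopologicalSpace (expc X) :=
  TopologicalSpace.induced Subtype.val (vietorisTop X)

/-- A map between continua is atomic if it is monotone and its restriction to the
preimage of any non-degenerate subcontinuum `Z` of `Y` is an irreducible map onto `Z`
(no proper closed subset of `f ⁻¹ Z` maps onto `Z`). -/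
def IsAtomicMap {X Y : Type u} [TopologicalSpace X] [TopologicalSpace Y] (f : X → Y) : Prop :=
  (∀ y : Y, IsConnected (f ⁻¹' {y})) ∧
  ∀ Z : Set Y, IsCompact Z → IsConnected Z → Z.Nontrivial →
    ∀ A : Set X, IsClosed A → A ⊆ f ⁻¹' Z → f '' A = Z → A = f ⁻¹' Z

/-- An atomic map is `I`-atomic if each of its fibers is a singleton or an arc. -/
def IsIAtomicMap {X Y : Type u} [TopologicalSpace X] [TopologicalSpace Y] (f : X → Y) : Prop :=
  IsAtomicMap f ∧
  ∀ y : Y, (∃ x, f ⁻¹' {y} = {x}) ∨ Nonempty (↥(f ⁻¹' {y}) ≃ₜ unitInterval)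

/-- `X` is homeomorphic to the inverse limit of the inverse system `(Z, π)`. -/
def HomeoToInvLimit (X : Type u) [TopologicalSpace X] {ι : Type u} [Preorder ι]
    (Z : ι → Type u) (tZ : ∀ α, TopologicalSpace (Z α))
    (π : ∀ α β : ι, α ≤ β → Z β → Z α) : Prop :=
  haveI := tZ
  Nonempty (X ≃ₜ {z : ∀ α, Z α // ∀ (α β : ι) (h : α ≤ β), π α β h (z β) = z α})

/-!
Fix a countable dense `Q ⊆ [0,1]`. The points of the needles whose non-zero coordinate lies
in `Q` form a set of size `κ · ℵ₀ = κ` meeting every non-empty open set and every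
non-degenerate connected set: if two points of a connected set differ in the `i`-th
coordinate, the intermediate value theorem puts a point of the `i`-th needle with coordinate
in `Q` between them. A disjoint family of sets meeting a set `D` has at most `#D` members,
so `c` and `Sln` are at most `κ`. The open spokes `{x_i ≠ 0}` and the arcs `[a, 1]` of the
needles give `κ` disjoint open sets and subcontinua. Since embeddings carry disjoint
subcontinua to disjoint subcontinua, the Suslinian number of a continuum is its own, and the
hedgehog is a continuum. Finally `κ = c ≤ w ≤ w([0,1]^κ) = κ`.
-/

open Function

universe v

section CardinalInvariants

variable {X : Type u} [TopologicalSpace X]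

lemma tweight_le_mk {B : Set (Set X)} (hB : IsTopologicalBasis B) : tweight X ≤ #B :=
  csInf_le' ⟨B, hB, rfl⟩

lemma le_tweight {κ : Cardinal.{u}} (h : ∀ B : Set (Set X), IsTopologicalBasis B → κ ≤ #B) :
    κ ≤ tweight X :=
  le_csInf ⟨_, _, isTopologicalBasis_opens, rfl⟩ (by rintro _ ⟨B, hB, rfl⟩; exact h B hB)

lemma mk_le_suslinNumber {𝒰 : Set (Set X)} (h𝒰 : ∀ U ∈ 𝒰, IsOpen U ∧ U.Nonempty)
    (hd : 𝒰.PairwiseDisjoint id) : #𝒰 ≤ suslinNumber X :=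
  le_ciSup bddAbove_of_small
    (⟨𝒰, h𝒰, hd⟩ : {𝒰 : Set (Set X) //
      (∀ U ∈ 𝒰, IsOpen U ∧ U.Nonempty) ∧ 𝒰.PairwiseDisjoint id})

lemma suslinNumber_le {κ : Cardinal.{u}}
    (h : ∀ 𝒰 : Set (Set X), (∀ U ∈ 𝒰, IsOpen U ∧ U.Nonempty) → 𝒰.PairwiseDisjoint id → #𝒰 ≤ κ) :
    suslinNumber X ≤ κ :=
  ciSup_le' fun 𝒰 => h 𝒰.1 𝒰.2.1 𝒰.2.2

lemma mk_le_slnC {𝒞 : Set (Set X)} (h𝒞 : ∀ C ∈ 𝒞, IsCompact C ∧ IsConnected C ∧ C.Nontrivial)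
    (hd : 𝒞.PairwiseDisjoint id) : #𝒞 ≤ SlnC X :=
  le_ciSup bddAbove_of_small
    (⟨𝒞, h𝒞, hd⟩ : {𝒞 : Set (Set X) //
      (∀ C ∈ 𝒞, IsCompact C ∧ IsConnected C ∧ C.Nontrivial) ∧ 𝒞.PairwiseDisjoint id})

lemma slnC_le {κ : Cardinal.{u}}
    (h : ∀ 𝒞 : Set (Set X), (∀ C ∈ 𝒞, IsCompact C ∧ IsConnected C ∧ C.Nontrivial) →
      𝒞.PairwiseDisjoint id → #𝒞 ≤ κ) :
    SlnC X ≤ κ :=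
  ciSup_le' fun 𝒞 => h 𝒞.1 𝒞.2.1 𝒞.2.2

lemma suslinNumber_le_tweight : suslinNumber X ≤ tweight X := by
  refine suslinNumber_le fun 𝒰 h𝒰 hd => le_tweight fun B hB => ?_
  have hsub : ∀ U : 𝒰, ∃ V ∈ B, V.Nonempty ∧ V ⊆ U := fun U => by
    obtain ⟨x, hx⟩ := (h𝒰 U U.2).2
    obtain ⟨V, hVB, hxV, hVU⟩ := hB.exists_subset_of_mem_open hx (h𝒰 U U.2).1
    exact ⟨V, hVB, ⟨x, hxV⟩, hVU⟩
  choose V hVB hVne hVU using hsub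
  refine mk_le_of_injective (f := fun U => (⟨V U, hVB U⟩ : B)) fun U W hUW => ?_
  obtain ⟨x, hx⟩ := hVne U
  have hVW : V U = V W := congrArg Subtype.val hUW
  exact Subtype.ext (hd.elim_set U.2 W.2 x (hVU U hx) (hVU W (hVW ▸ hx)))

lemma tweight_subtype_le (s : Set X) : tweight s ≤ tweight X :=
  le_tweight fun _ hB => (tweight_le_mk (isTopologicalBasis_subtype hB (· ∈ s))).trans mk_image_le

lemma slnC_le_slnC_of_continuous_injective {Y : Type u} [TopologicalSpace Y] {e : X → Y}
    (hc : Continuous e) (hi : Injective e) : SlnC X ≤ SlnC Y := by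
  refine slnC_le fun 𝒞 h𝒞 hd => ?_
  rw [← mk_image_eq (image_injective.2 hi)]
  refine mk_le_slnC ?_ ?_
  · rintro _ ⟨C, hC, rfl⟩
    obtain ⟨hCc, hCconn, hCnt⟩ := h𝒞 C hC
    exact ⟨hCc.image hc, hCconn.image _ hc.continuousOn, hCnt.image hi⟩
  · rintro _ ⟨C, hC, rfl⟩ _ ⟨D, hD, rfl⟩ hne
    exact (disjoint_image_iff hi).2 (hd hC hD fun h => hne (h ▸ rfl))

lemma sln_eq_slnC [CompactSpace X] [T2Space X] [ConnectedSpace X] : Sln X = SlnC X := by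
  have hX : SlnC X ∈ {κ : Cardinal.{u} | ∃ (Y : Type u) (_ : TopologicalSpace Y),
      CompactSpace Y ∧ T2Space Y ∧ ConnectedSpace Y ∧
      (∃ e : X → Y, IsEmbedding e) ∧ SlnC Y = κ} :=
    ⟨X, _, ‹_›, ‹_›, ‹_›, ⟨id, .id⟩, rfl⟩
  refine le_antisymm (csInf_le' hX) (le_csInf ⟨_, hX⟩ ?_)
  rintro _ ⟨Y, _, -, -, -, ⟨e, he⟩, rfl⟩
  exact slnC_le_slnC_of_continuous_injective he.continuous he.injective

end CardinalInvariants

lemma Set.PairwiseDisjoint.mk_le_of_forall_inter_nonempty {α : Type u} {𝒮 : Set (Set α)}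
    (hd : 𝒮.PairwiseDisjoint id) {D : Set α} (hD : ∀ S ∈ 𝒮, (S ∩ D).Nonempty) : #𝒮 ≤ #D := by
  choose x hxS hxD using fun S : 𝒮 => hD S S.2
  refine mk_le_of_injective (f := fun S => (⟨x S, hxD S⟩ : D)) fun S T hST => ?_
  have hxST : x S = x T := congrArg Subtype.val hST
  exact Subtype.ext (hd.elim_set S.2 T.2 _ (hxS S) (hxST ▸ hxS T))

lemma mk_range_eq_of_pairwise_disjoint {α ι : Type u} {f : ι → Set α}
    (hd : Pairwise (Disjoint on f)) (hne : ∀ i, (f i).Nonempty) : #(range f) = #ι := by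
  refine mk_range_eq f fun i j hij => ?_
  by_contra hne'
  obtain ⟨x, hx⟩ := hne i
  exact (hd hne').ne_of_mem hx (hij ▸ hx) rfl

lemma tweight_pi_le {ι : Type u} [Infinite ι] {X : Type v} [TopologicalSpace X]
    [SecondCountableTopology X] : tweight (ι → X) ≤ lift.{v} #ι := by
  classical
  obtain ⟨b, hbc, -, hb⟩ := exists_countable_basis X
  -- a basic box `(F : Set ι).pi U` is coded by the finite set of pairs `(i, U i)`, `i ∈ F`
  let g : Finset (ι × b) → Set (ι → X) := fun p => ⋂ q ∈ p, (fun x => x q.1) ⁻¹' q.2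
  have hsub : {S | ∃ (U : ι → Set X) (F : Finset ι), (∀ i ∈ F, U i ∈ b) ∧
      S = (F : Set ι).pi U} ⊆ range g := by
    rintro _ ⟨U, F, hU, rfl⟩
    refine ⟨F.attach.image fun i : F => (i.1, ⟨U i, hU i i.2⟩), ?_⟩
    ext x
    simp only [g, Set.pi, Finset.mem_image, Finset.mem_attach, true_and, mem_iInter,
      mem_preimage, Finset.mem_coe]
    exact ⟨fun h i hi => h _ ⟨⟨i, hi⟩, rfl⟩, by rintro h _ ⟨⟨i, hi⟩, rfl⟩; exact h i hi⟩
  calc tweight (ι → X)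
      ≤ #(range g) := (tweight_le_mk (isTopologicalBasis_pi fun _ => hb)).trans
        (mk_le_mk_of_subset hsub)
    _ ≤ #(Finset (ι × b)) := mk_range_le
    _ ≤ #(List (ι × b)) := mk_le_of_surjective List.toFinset_surjective
    _ ≤ max ℵ₀ #(ι × b) := mk_list_le_max _
    _ ≤ lift.{v} #ι := by
      have hι : ℵ₀ ≤ lift.{v} #ι := aleph0_le_lift.2 (aleph0_le_mk ι)
      refine max_le hι ?_
      calc #(ι × b) = lift.{v} #ι * lift.{u} #b := mk_prod _ _
        _ ≤ lift.{v} #ι * ℵ₀ := mul_le_mul_right (lift_le_aleph0.2 hbc.le_aleph0) _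
        _ = lift.{v} #ι := mul_aleph0_eq hι

def hedgehog (ι : Type u) : Set (ι → unitInterval) :=
  {x | {i | x i ≠ 0}.Subsingleton}

namespace Hedgehog

variable {ι : Type u} {Q : Set unitInterval}

open Classical in
noncomputable def needle (i : ι) (t : unitInterval) : hedgehog ι :=
  ⟨Pi.single i t, subsingleton_singleton.anti Pi.support_single_subset⟩

@[simp]
lemma needle_apply_self (i : ι) (t : unitInterval) : (needle i t).1 i = t := by
  simp [needle]

lemma needle_apply_of_ne {i j : ι} (h : j ≠ i) (t : unitInterval) : (needle i t).1 j = 0 := by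
  simp [needle, h]

lemma needle_zero (i j : ι) : needle i 0 = needle j 0 := by
  simp [needle]

lemma needle_injective (i : ι) : Injective (needle i) := fun s t h => by
  simpa using congrArg (·.1 i) h

lemma continuous_needle (i : ι) : Continuous (needle i) := by
  classical
  exact (continuous_single (A := fun _ : ι => unitInterval) i).subtype_mk _

lemma eq_needle (x : hedgehog ι) {i : ι} (hi : x.1 i ≠ 0) : x = needle i (x.1 i) := by
  refine Subtype.ext (funext fun j => ?_)
  by_cases hji : j = i
  · subst hji; simp
  · rw [needle_apply_of_ne hji]
    by_contra hj
    exact hji (x.2 hj hi)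

lemma exists_eq_needle [Nonempty ι] (x : hedgehog ι) : ∃ i t, needle i t = x := by
  by_cases h : ∃ i, x.1 i ≠ 0
  · obtain ⟨i, hi⟩ := h
    exact ⟨i, _, (eq_needle x hi).symm⟩
  · push Not at h
    let i := Classical.arbitrary ι
    refine ⟨i, 0, Subtype.ext (funext fun j => ?_)⟩
    by_cases hji : j = i
    · subst hji; simp [h]
    · rw [needle_apply_of_ne hji, h]

lemma isClosed_hedgehog : IsClosed (hedgehog ι) := by
  have : hedgehog ι = ⋂ (i) (j), {x | x i = 0 ∨ x j = 0 ∨ i = j} := by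
    ext x
    simp only [hedgehog, Set.Subsingleton, mem_iInter, mem_ofPred_eq]
    refine ⟨fun h i j => or_iff_not_imp_left.2 fun hi => or_iff_not_imp_left.2 fun hj => h hi hj,
      fun h i hi j hj => ((h i j).resolve_left hi).resolve_left hj⟩
  rw [this]
  exact isClosed_iInter fun i => isClosed_iInter fun j =>
    (isClosed_eq (continuous_apply i) continuous_const).union
      ((isClosed_eq (continuous_apply j) continuous_const).union isClosed_const)

instance : CompactSpace (hedgehog ι) :=
  isCompact_iff_compactSpace.1 isClosed_hedgehog.isCompact

instance [Nonempty ι] : ConnectedSpace (hedgehog ι) := by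
  let i₀ := Classical.arbitrary ι
  have hcover : ⋃ i, range (needle (ι := ι) i) = Set.univ :=
    iUnion_eq_univ_iff.2 fun x => by
      obtain ⟨i, t, rfl⟩ := exists_eq_needle x
      exact ⟨i, t, rfl⟩
  have hcommon : (⋂ i, range (needle (ι := ι) i)).Nonempty :=
    ⟨needle i₀ 0, mem_iInter.2 fun i => ⟨0, needle_zero i i₀⟩⟩
  have : PreconnectedSpace (hedgehog ι) :=
    ⟨hcover ▸ isPreconnected_iUnion hcommon fun i => isPreconnected_range (continuous_needle i)⟩
  exact { toNonempty := ⟨needle i₀ 0⟩ }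

def spoke (i : ι) : Set (hedgehog ι) := {x | x.1 i ≠ 0}

lemma isOpen_spoke (i : ι) : IsOpen (spoke i) :=
  isOpen_compl_singleton.preimage ((continuous_apply i).comp continuous_subtype_val)

lemma needle_mem_spoke (i : ι) {t : unitInterval} (ht : t ≠ 0) : needle i t ∈ spoke i := by
  simpa [spoke] using ht

lemma pairwise_disjoint_spoke : Pairwise (Disjoint on spoke (ι := ι)) :=
  fun _ _ hij => disjoint_left.2 fun x hi hj => hij (x.2 hi hj)


lemma mk_iUnion_needle_image_le [Infinite ι] (hQ : Q.Countable) :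
    #(⋃ i, needle (ι := ι) i '' Q) ≤ #ι :=
  calc #(⋃ i, needle (ι := ι) i '' Q)
      ≤ #ι * ⨆ i, #(needle (ι := ι) i '' Q) := mk_iUnion_le _
    _ ≤ #ι * ℵ₀ := mul_le_mul_right (ciSup_le' fun _ => (hQ.image _).le_aleph0) _
    _ = #ι := mul_aleph0_eq (aleph0_le_mk ι)

lemma dense_iUnion_needle_image [Nonempty ι] (hQ : Dense Q) :
    Dense (⋃ i, needle (ι := ι) i '' Q) := fun x => by
  obtain ⟨i, t, rfl⟩ := exists_eq_needle x
  exact closure_mono (subset_iUnion (fun i => needle i '' Q) i)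
    (image_closure_subset_closure_image (continuous_needle i) (mem_image_of_mem _ (hQ t)))

lemma _root_.IsPreconnected.inter_iUnion_needle_image_nonempty (hQ : Dense Q)
    {C : Set (hedgehog ι)} (hC : IsPreconnected C) (hCnt : C.Nontrivial) :
    (C ∩ ⋃ i, needle i '' Q).Nonempty := by
  obtain ⟨a, ha, b, hb, hab⟩ := hCnt
  obtain ⟨i, hi⟩ : ∃ i, a.1 i ≠ b.1 i := Function.ne_iff.1 (Subtype.coe_ne_coe.2 hab)
  wlog hlt : a.1 i < b.1 i generalizing a b
  · exact this b hb a ha hab.symm hi.symm ((not_lt.1 hlt).lt_of_ne hi.symm)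
  obtain ⟨q, hqQ, hq⟩ := hQ.exists_between hlt
  have hIcc := (hC.image (fun x : hedgehog ι => x.1 i)
    ((continuous_apply i).comp continuous_subtype_val).continuousOn).Icc_subset
      (mem_image_of_mem _ ha) (mem_image_of_mem _ hb)
  obtain ⟨y, hyC, hy⟩ := hIcc (Ioo_subset_Icc_self hq)
  replace hy : y.1 i = q := hy
  have hq0 : y.1 i ≠ 0 :=
    hy ▸ unitInterval.pos_iff_ne_zero.1 (unitInterval.nonneg'.trans_lt hq.1)
  exact ⟨y, hyC, mem_iUnion.2 ⟨i, q, hqQ, hy ▸ (eq_needle y hq0).symm⟩⟩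

end Hedgehog

open Hedgehog

section

variable {ι : Type u}

lemma suslinNumber_hedgehog [Infinite ι] : suslinNumber (hedgehog ι) = #ι := by
  obtain ⟨Q, hQc, hQd⟩ := exists_countable_dense unitInterval
  refine le_antisymm (suslinNumber_le fun 𝒰 h𝒰 hd => ?_) ?_
  · refine (hd.mk_le_of_forall_inter_nonempty fun U hU => ?_).trans
      (mk_iUnion_needle_image_le hQc)
    exact (dense_iUnion_needle_image hQd).inter_open_nonempty U (h𝒰 U hU).1 (h𝒰 U hU).2
  · rw [← mk_range_eq_of_pairwise_disjoint pairwise_disjoint_spoke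
      fun i => ⟨_, needle_mem_spoke i one_ne_zero⟩]
    refine mk_le_suslinNumber ?_ pairwise_disjoint_spoke.range_pairwise
    rintro _ ⟨i, rfl⟩
    exact ⟨isOpen_spoke i, _, needle_mem_spoke i one_ne_zero⟩

lemma slnC_hedgehog [Infinite ι] : SlnC (hedgehog ι) = #ι := by
  obtain ⟨Q, hQc, hQd⟩ := exists_countable_dense unitInterval
  refine le_antisymm (slnC_le fun 𝒞 h𝒞 hd => ?_) ?_
  · refine (hd.mk_le_of_forall_inter_nonempty fun C hC => ?_).trans
      (mk_iUnion_needle_image_le hQc)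
    exact (h𝒞 C hC).2.1.isPreconnected.inter_iUnion_needle_image_nonempty hQd (h𝒞 C hC).2.2
  · obtain ⟨a, ha0, ha1⟩ := exists_between (zero_lt_one : (0 : unitInterval) < 1)
    let arc (i : ι) := needle i '' Icc a 1
    have harc : ∀ i, arc i ⊆ spoke i := by
      rintro i _ ⟨t, ht, rfl⟩
      exact needle_mem_spoke i (ha0.trans_le ht.1).ne'
    have hd : Pairwise (Disjoint on arc) := fun i j hij =>
      (pairwise_disjoint_spoke hij).mono (harc i) (harc j)
    rw [← mk_range_eq_of_pairwise_disjoint hd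
      fun i => ⟨_, mem_image_of_mem _ (left_mem_Icc.2 ha1.le)⟩]
    refine mk_le_slnC ?_ hd.range_pairwise
    rintro _ ⟨i, rfl⟩
    exact ⟨isCompact_Icc.image (continuous_needle i),
      (isConnected_Icc ha1.le).image _ (continuous_needle i).continuousOn,
      Set.Nontrivial.image ⟨a, left_mem_Icc.2 ha1.le, 1, right_mem_Icc.2 ha1.le, ha1.ne⟩
        (needle_injective i)⟩

lemma tweight_hedgehog [Infinite ι] : tweight (hedgehog ι) = #ι := by
  refine le_antisymm ((tweight_subtype_le _).trans ?_)
    (suslinNumber_hedgehog.ge.trans suslinNumber_le_tweight)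
  simpa using tweight_pi_le (ι := ι) (X := unitInterval)

end

/-- For every infinite cardinal `κ` (here `κ = #ι`), the hedgehog with `κ`
needles satisfies `Sln(X) = c(X) = w(X) = κ`. -/
theorem stmt_1 (ι : Type u) [Infinite ι] :
    Sln ↥{x : ι → unitInterval | {i : ι | x i ≠ 0}.Subsingleton} = #ι ∧
    suslinNumber ↥{x : ι → unitInterval | {i : ι | x i ≠ 0}.Subsingleton} = #ι ∧
    tweight ↥{x : ι → unitInterval | {i : ι | x i ≠ 0}.Subsingleton} = #ι :=
  ⟨(sln_eq_slnC (X := hedgehog ι)).trans slnC_hedgehog, suslinNumber_hedgehog, tweight_hedgehog⟩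
end

section
/- If X and Y are compact Hausdorff spaces and f : X → Y is a continuous surjective monotone map, then Sln(Y) ≤ Sln(X). -/
open Set Cardinal TopologicalSpace Topology

universe u

/-!
A compact Hausdorff space embeds in a continuum (a Tychonoff cube), so `Sln X` is an infimum over
a nonempty set. Given a continuum `Z ⊇ X`, glue `Z` to `Y` along `f` by collapsing each
`f⁻¹(y) ⊆ Z` to a point. Since `X` is compact the quotient map `Z → Z ∪_f Y` is closed, so the
adjunction space is again a continuum; it contains `Y`, and the fibres of the quotient map are the
fibres of `f` or points. Preimages under a closed map with connected fibres send disjoint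
non-degenerate subcontinua to disjoint non-degenerate subcontinua, so `SlnC (Z ∪_f Y) ≤ SlnC Z`.
-/

open Function

theorem IsClosedMap.normalSpace {X Y : Type*} [TopologicalSpace X] [TopologicalSpace Y]
    [NormalSpace X] {f : X → Y} (hf : IsClosedMap f) (hcont : Continuous f)
    (hsurj : Surjective f) : NormalSpace Y where
  normal s t hs ht hst := by
    rw [separatedNhds_iff_disjoint, ← Filter.disjoint_comap_iff hsurj,
      hf.comap_nhdsSet_eq hcont, hf.comap_nhdsSet_eq hcont, ← separatedNhds_iff_disjoint]
    exact normal_separation (hs.preimage hcont) (ht.preimage hcont) (hst.preimage f)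

theorem IsClosedMap.t1Space {X Y : Type*} [TopologicalSpace X] [TopologicalSpace Y]
    [T1Space X] {f : X → Y} (hf : IsClosedMap f) (hsurj : Surjective f) : T1Space Y where
  t1 y := by
    obtain ⟨x, rfl⟩ := hsurj y
    simpa using hf _ (isClosed_singleton (x := x))

section Suslinian

variable {X Y : Type u} [TopologicalSpace X] [TopologicalSpace Y]

theorem le_slnC {𝒞 : Set (Set X)} (h𝒞 : ∀ C ∈ 𝒞, IsCompact C ∧ IsConnected C ∧ C.Nontrivial)
    (hdisj : 𝒞.PairwiseDisjoint id) : #𝒞 ≤ SlnC X :=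
  le_ciSup (f := fun 𝒞 : {𝒞 : Set (Set X) //
      (∀ C ∈ 𝒞, IsCompact C ∧ IsConnected C ∧ C.Nontrivial) ∧ 𝒞.PairwiseDisjoint id} => #𝒞.1)
    ⟨#(Set X), by rintro _ ⟨𝒞, rfl⟩; exact mk_set_le _⟩ ⟨𝒞, h𝒞, hdisj⟩

theorem slnC_le_of_connected_fibers [CompactSpace X] [T2Space Y] {f : X → Y}
    (hf : Continuous f) (hfib : ∀ y, IsConnected (f ⁻¹' {y})) : SlnC Y ≤ SlnC X := by
  refine ciSup_le' fun ⟨𝒞, h𝒞, hdisj⟩ => ?_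
  have hsurj : Surjective f := fun y => (hfib y).nonempty
  have hq : IsQuotientMap f := hf.isClosedMap.isQuotientMap hf hsurj
  have hinj : InjOn (f ⁻¹' ·) 𝒞 := hsurj.preimage_injective.injOn
  calc #𝒞 = #((f ⁻¹' ·) '' 𝒞) := (mk_image_eq_of_injOn _ _ hinj).symm
    _ ≤ SlnC X := by
      refine le_slnC ?_ ((hinj.pairwiseDisjoint_image).2 fun C hC D hD hCD =>
        (hdisj hC hD hCD).preimage f)
      rintro _ ⟨C, hC, rfl⟩
      obtain ⟨hCc, hCconn, hCnt⟩ := h𝒞 C hC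
      exact ⟨(hCc.isClosed.preimage hf).isCompact,
        hq.isCoinducing.isConnected_preimage_of_isClosed hfib hCc.isClosed hCconn,
        hCnt.preimage hsurj⟩

end Suslinian

/-- The relation whose quotient is the adjunction space `Z ∪_f Y` when `e` is an embedding,
encoded as the kernel of the map `Z → Y ⊕ Z` sending `e x` to `f x` and fixing the points off
`range e`. -/
noncomputable def adjunctionSetoid {X Y Z : Type*} (e : X → Z) (f : X → Y) : Setoid Z :=
  Setoid.ker (extend e (Sum.inl ∘ f) Sum.inr)

abbrev AdjunctionSpace {X Y Z : Type*} (e : X → Z) (f : X → Y) : Type _ :=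
  Quotient (adjunctionSetoid e f)

namespace AdjunctionSpace

variable {X Y Z : Type*} {e : X → Z} {f : X → Y}

variable (e f) in
noncomputable def mk : Z → AdjunctionSpace e f := Quotient.mk _

theorem mk_eq_mk_iff {z w : Z} :
    mk e f z = mk e f w ↔ extend e (Sum.inl ∘ f) Sum.inr z = extend e (Sum.inl ∘ f) Sum.inr w :=
  Quotient.eq

theorem mk_apply_eq_mk_apply_iff (he : Injective e) {x x' : X} :
    mk e f (e x) = mk e f (e x') ↔ f x = f x' := by
  simp [mk_eq_mk_iff, he.extend_apply]

theorem mk_eq_mk_of_notMem_range {z w : Z} (hz : z ∉ range e) :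
    mk e f w = mk e f z ↔ w = z := by
  rw [mk_eq_mk_iff, extend_apply' _ _ _ hz]
  by_cases hw : w ∈ range e
  · classical
    obtain ⟨x, rfl⟩ := hw
    rw [extend_def, dif_pos ⟨x, rfl⟩]
    simp only [comp_apply, reduceCtorEq, false_iff]
    rintro rfl
    exact hz ⟨x, rfl⟩
  · simp [extend_apply' _ _ _ hw]

theorem surjective_mk : Surjective (mk e f) := Quotient.mk_surjective

theorem preimage_image_mk (he : Injective e) (A : Set Z) :
    mk e f ⁻¹' (mk e f '' A) = A ∪ e '' (f ⁻¹' (f '' (e ⁻¹' A))) := by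
  ext w
  simp only [mem_preimage, mem_image, mem_union]
  by_cases hw : w ∈ range e
  · obtain ⟨x, rfl⟩ := hw
    constructor
    · rintro ⟨a, ha, hax⟩
      by_cases hae : a ∈ range e
      · obtain ⟨x', rfl⟩ := hae
        exact Or.inr ⟨x, ⟨x', ha, (mk_apply_eq_mk_apply_iff he).1 hax⟩, rfl⟩
      · exact absurd ⟨x, (mk_eq_mk_of_notMem_range hae).1 hax.symm⟩ hae
    · rintro (hx | ⟨x'', ⟨x', hx', hff⟩, hex⟩)
      · exact ⟨e x, hx, rfl⟩
      · exact ⟨e x', hx', (mk_apply_eq_mk_apply_iff he).2 (hff.trans (congrArg f (he hex)))⟩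
  · constructor
    · rintro ⟨a, ha, haw⟩
      exact Or.inl ((mk_eq_mk_of_notMem_range hw).1 haw ▸ ha)
    · rintro (hwA | ⟨x, -, rfl⟩)
      · exact ⟨w, hwA, rfl⟩
      · exact absurd ⟨x, rfl⟩ hw

variable [TopologicalSpace Z]

theorem isQuotientMap_mk : IsQuotientMap (mk e f) := isQuotientMap_quotient_mk'

variable [TopologicalSpace X]

theorem isConnected_preimage_mk_singleton (hec : Continuous e) (hei : Injective e)
    (hfib : ∀ y, IsConnected (f ⁻¹' {y})) (c : AdjunctionSpace e f) :
    IsConnected (mk e f ⁻¹' {c}) := by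
  obtain ⟨z, rfl⟩ := surjective_mk c
  rw [← image_singleton, preimage_image_mk hei]
  by_cases hz : z ∈ range e
  · obtain ⟨x, rfl⟩ := hz
    have hsub : {e x} ⊆ e '' (f ⁻¹' {f x}) := singleton_subset_iff.2 ⟨x, rfl, rfl⟩
    rw [← image_singleton, hei.preimage_image, image_singleton, image_singleton,
      union_eq_right.2 hsub]
    exact (hfib (f x)).image e hec.continuousOn
  · rw [preimage_singleton_eq_empty.2 hz]
    simpa using isConnected_singleton

variable [TopologicalSpace Y]

theorem isClosedMap_mk [CompactSpace X] [T2Space Y] [T2Space Z] (hec : Continuous e)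
    (hei : Injective e) (hf : Continuous f) : IsClosedMap (mk e f) := by
  intro A hA
  rw [← isQuotientMap_mk.isClosed_preimage, preimage_image_mk hei]
  exact hA.union ((((hA.preimage hec).isCompact.image hf).isClosed.preimage hf).isCompact.image
    hec).isClosed

theorem t2Space [CompactSpace X] [T2Space Y] [CompactSpace Z] [T2Space Z] (hec : Continuous e)
    (hei : Injective e) (hf : Continuous f) : T2Space (AdjunctionSpace e f) :=
  have := (isClosedMap_mk hec hei hf).normalSpace isQuotientMap_mk.continuous surjective_mk
  have := (isClosedMap_mk hec hei hf).t1Space surjective_mk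
  inferInstance

theorem exists_isEmbedding [CompactSpace X] [CompactSpace Y] [T2Space Y] [CompactSpace Z]
    [T2Space Z] (hec : Continuous e) (hei : Injective e) (hf : Continuous f)
    (hsurj : Surjective f) : ∃ φ : Y → AdjunctionSpace e f, IsEmbedding φ := by
  have := t2Space hec hei hf
  let φ (y : Y) : AdjunctionSpace e f := mk e f (e (surjInv hsurj y))
  have hφ : φ ∘ f = mk e f ∘ e :=
    funext fun x => (mk_apply_eq_mk_apply_iff hei).2 (surjInv_eq hsurj _)
  have hcont : Continuous φ := by
    rw [(hf.isClosedMap.isQuotientMap hf hsurj).continuous_iff, hφ]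
    exact isQuotientMap_mk.continuous.comp hec
  have hinj : Injective φ := fun y y' h => by
    simpa [surjInv_eq] using (mk_apply_eq_mk_apply_iff hei).1 h
  exact ⟨φ, (hcont.isClosedEmbedding hinj).isEmbedding⟩

end AdjunctionSpace

theorem exists_isEmbedding_continuum (X : Type u) [TopologicalSpace X] [CompactSpace X]
    [T2Space X] : ∃ (K : Type u) (_ : TopologicalSpace K), CompactSpace K ∧ T2Space K ∧
      ConnectedSpace K ∧ ∃ e : X → K, IsEmbedding e := by
  let e (x : X) (g : C(X, unitInterval)) : unitInterval := g x
  have hinj : Injective e := fun x y hxy => by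
    by_contra hne
    obtain ⟨g, hg, hgxy⟩ := separatesPoints_continuous_of_t35Space_Icc hne
    exact hgxy (congrFun hxy ⟨g, hg⟩)
  exact ⟨_, inferInstance, inferInstance, inferInstance, inferInstance, e,
    ((continuous_pi fun g => g.continuous).isClosedEmbedding hinj).isEmbedding⟩

/-- If `X`, `Y` are compact Hausdorff and `f : X → Y` is a continuous
surjective monotone map, then `Sln(Y) ≤ Sln(X)`. -/
theorem stmt_2 {X Y : Type u} [TopologicalSpace X] [CompactSpace X] [T2Space X]
    [TopologicalSpace Y] [CompactSpace Y] [T2Space Y]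
    (f : X → Y) (hf : Continuous f) (hsurj : Function.Surjective f)
    (hmono : ∀ y : Y, IsConnected (f ⁻¹' {y})) :
    Sln Y ≤ Sln X := by
  obtain ⟨K, _, hKc, hK2, hKconn, hXK⟩ := exists_isEmbedding_continuum X
  refine le_csInf ⟨_, K, _, hKc, hK2, hKconn, hXK, rfl⟩ ?_
  rintro _ ⟨Z, _, _, _, _, ⟨e, he⟩, rfl⟩
  have := AdjunctionSpace.t2Space he.continuous he.injective hf
  calc Sln Y ≤ SlnC (AdjunctionSpace e f) :=
        csInf_le (OrderBot.bddBelow _) ⟨_, _, inferInstance, this, inferInstance,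
          AdjunctionSpace.exists_isEmbedding he.continuous he.injective hf hsurj, rfl⟩
    _ ≤ SlnC Z := slnC_le_of_connected_fibers AdjunctionSpace.isQuotientMap_mk.continuous
        (AdjunctionSpace.isConnected_preimage_mk_singleton he.continuous he.injective hmono)
end

section
/- For every non-degenerate metrizable Suslinian continuum Y and every countable subset Z ⊆ Y, there exist a metrizable Suslinian continuum X and an I-atomic continuous surjection f : X → Y whose non-degeneracy set N(f) = {y ∈ Y : |f⁻¹(y)| > 1} equals Z. -/
open Set Cardinal TopologicalSpace Topology

universe u

namespace Stmt16Aux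

open Filter Set

noncomputable def psi (r : ℝ) : ℝ := Real.sin (1 / r) ^ 2

lemma psi_mem (r : ℝ) : psi r ∈ unitInterval :=
  ⟨sq_nonneg _, by simpa [psi] using Real.sin_sq_le_one (1 / r)⟩

lemma psi_contAt {r : ℝ} (hr : r ≠ 0) : ContinuousAt psi r := by
  unfold psi
  exact (Real.continuous_sin.continuousAt.comp
    (continuousAt_const.div continuousAt_id hr)).pow 2

lemma osc {t s ε : ℝ} (ht : t ∈ unitInterval) (hs : 0 < s) (hε : 0 < ε) :
    ∃ a b : ℝ, 0 < a ∧ a < b ∧ b < s ∧ ∀ r ∈ Set.Icc a b, |psi r - t| ≤ ε := by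
  obtain ⟨n, hn⟩ := exists_nat_gt (max (1 / s) 1 - Real.arcsin (Real.sqrt t))
  set u : ℝ := Real.arcsin (Real.sqrt t) + n * (2 * Real.pi) with hu
  have hπ : (1 : ℝ) ≤ 2 * Real.pi := by nlinarith [Real.pi_gt_three]
  have hularge : max (1 / s) 1 < u := by
    have : (n : ℝ) * 1 ≤ n * (2 * Real.pi) := by
      apply mul_le_mul_of_nonneg_left hπ (Nat.cast_nonneg n)
    simp only [hu]; nlinarith
  have hupos : 0 < u := lt_trans (lt_of_lt_of_le one_pos (le_max_right (1/s) 1)) hularge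
  have husin : Real.sin u ^ 2 = t := by
    rw [hu, Real.sin_add_nat_mul_two_pi,
      Real.sin_arcsin (by linarith [Real.sqrt_nonneg t]) (Real.sqrt_le_one.mpr ht.2),
      Real.sq_sqrt ht.1]
  set r₀ : ℝ := 1 / u with hr₀
  have hr₀pos : 0 < r₀ := by positivity
  have hr₀s : r₀ < s := by
    rw [hr₀, div_lt_iff₀ hupos]
    have h1s : 1 / s < u := lt_of_le_of_lt (le_max_left _ _) hularge
    calc (1 : ℝ) = s * (1 / s) := by field_simp
    _ < s * u := by exact mul_lt_mul_of_pos_left h1s hs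
  have hψr₀ : psi r₀ = t := by rw [psi, hr₀, one_div_one_div]; exact husin
  have hcont := psi_contAt (ne_of_gt hr₀pos)
  rw [Metric.continuousAt_iff] at hcont
  obtain ⟨δ, hδpos, hδ⟩ := hcont ε hε
  set m : ℝ := min (δ / 2) (min (r₀ / 2) ((s - r₀) / 2)) with hm
  have hmpos : 0 < m := by
    apply lt_min (by linarith) (lt_min (by linarith) (by linarith))
  refine ⟨r₀ - m, r₀ + m, ?_, by linarith, ?_, ?_⟩
  · have : m ≤ r₀ / 2 := le_trans (min_le_right _ _) (min_le_left _ _)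
    linarith
  · have : m ≤ (s - r₀) / 2 := le_trans (min_le_right _ _) (min_le_right _ _)
    linarith
  · intro r hr
    have hmδ : m ≤ δ / 2 := min_le_left _ _
    have hd : dist r r₀ < δ := by
      rw [Real.dist_eq]
      have : |r - r₀| ≤ m := abs_le.2 ⟨by linarith [hr.1], by linarith [hr.2]⟩
      linarith
    have := hδ hd
    rw [hψr₀] at this
    exact le_of_lt (by rwa [Real.dist_eq] at this)




variable {Y : Type u} [MetricSpace Y]

/-- coordinate functions -/
noncomputable def phi (Z : Set Y) (y : Y) : Z → unitInterval :=
  fun z => ⟨psi (dist y z.1), psi_mem _⟩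

/-- graph map -/
noncomputable def gr (Z : Set Y) (y : Y) : Y × (Z → unitInterval) := (y, phi Z y)

/-- the blown-up space, as a subset of `Y × (Z → unitInterval)` -/
noncomputable def Xs (Z : Set Y) : Set (Y × (Z → unitInterval)) := closure (gr Z '' Zᶜ)

lemma phi_contAt (Z : Set Y) (z : Z) {y : Y} (hy : y ≠ z) :
    ContinuousAt (fun y => phi Z y z) y := by
  have h1 : ContinuousAt (fun y : Y => dist y (z : Y)) y :=
    (continuous_id.dist continuous_const).continuousAt
  have h2 : ContinuousAt psi (dist y (z : Y)) := psi_contAt (dist_ne_zero.2 hy)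
  have h3 : ContinuousAt (psi ∘ fun x : Y => dist x (z : Y)) y := ContinuousAt.comp (x := y) h2 h1
  rw [ContinuousAt, tendsto_subtype_rng]
  exact h3

lemma snd_eq {Z : Set Y} (hZc : Z.Countable) {p : Y × (Z → unitInterval)} (hp : p ∈ Xs Z)
    (z : Z) (hz : p.1 ≠ z) : p.2 z = phi Z p.1 z := by
  haveI := hZc.to_subtype
  obtain ⟨x, hx, hlim⟩ := mem_closure_iff_seq_limit.mp hp
  have hxy : ∀ n, (x n).1 ∉ Z ∧ x n = gr Z ((x n).1) := by
    intro n
    obtain ⟨w, hw, hwe⟩ := hx n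
    constructor
    · rw [← hwe]; exact hw
    · rw [← hwe]; rfl
  have h1 : Filter.Tendsto (fun n => (x n).1) atTop (𝓝 p.1) :=
    (continuous_fst.continuousAt.tendsto).comp hlim
  have h2 : Filter.Tendsto (fun n => (x n).2 z) atTop (𝓝 (p.2 z)) :=
    (((continuous_apply z).comp continuous_snd).continuousAt.tendsto).comp hlim
  have h3 : Filter.Tendsto (fun n => phi Z ((x n).1) z) atTop (𝓝 (phi Z p.1 z)) :=
    (phi_contAt Z z hz).tendsto.comp h1
  have h4 : (fun n => (x n).2 z) = fun n => phi Z ((x n).1) z := by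
    funext n; rw [(hxy n).2]; rfl
  rw [h4] at h2
  exact tendsto_nhds_unique h2 h3

lemma key {Z : Set Y} (hZc : Z.Countable) {K : Set Y} (hKc : IsPreconnected K)
    (hKn : K.Nontrivial) (z : Z) (hzK : (z : Y) ∈ K) (q : Z → unitInterval)
    (hq : ∀ z' : Z, (z' : Y) ≠ (z : Y) → q z' = phi Z (z : Y) z') :
    ((z : Y), q) ∈ closure (gr Z '' (K \ Z)) := by
  -- a point of K different from z
  obtain ⟨c, hcK, d, hdK, hcd⟩ := hKn
  obtain ⟨y₁, hy₁K, hy₁z⟩ : ∃ y₁, y₁ ∈ K ∧ y₁ ≠ (z : Y) := by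
    rcases eq_or_ne c (z : Y) with h | h
    · exact ⟨d, hdK, by rw [← h]; exact hcd.symm⟩
    · exact ⟨c, hcK, h⟩
  set s : ℝ := dist y₁ (z : Y) with hs
  have hspos : 0 < s := dist_pos.2 hy₁z
  have him : Icc (0 : ℝ) s ⊆ (fun y => dist y (z : Y)) '' K := by
    apply IsPreconnected.Icc_subset
      (hKc.image _ (continuous_id.dist continuous_const).continuousOn)
      ⟨(z : Y), hzK, dist_self _⟩ ⟨y₁, hy₁K, rfl⟩
  -- construct the approximating sequence
  have hseq : ∀ n : ℕ, ∃ y, y ∈ K \ Z ∧ dist y (z : Y) < 1 / (n + 1) ∧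
      |psi (dist y (z : Y)) - ((q z : ℝ))| ≤ 1 / (n + 1) := by
    intro n
    have hn1 : (0 : ℝ) < 1 / (n + 1) := by positivity
    obtain ⟨a, b, hapos, hab, hbs, hosc⟩ :=
      osc (q z).2 (lt_min hspos hn1) hn1 (t := ((q z : ℝ)))
    by_contra hcon
    push_neg at hcon
    have hKZ : ∀ y ∈ K \ Z, dist y (z : Y) ∉ Icc a b := by
      intro y hy hmem
      have hlt : dist y (z : Y) < 1 / (n + 1) :=
        lt_of_le_of_lt hmem.2 (lt_of_lt_of_le hbs (min_le_right _ _))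
      exact absurd (hosc _ hmem) (not_le.2 (hcon y hy hlt))
    have hsub : Icc a b ⊆ (fun y => dist y (z : Y)) '' (K ∩ Z) := by
      intro v hv
      have hv' : v ∈ Icc (0 : ℝ) s :=
        ⟨le_trans (le_of_lt hapos) hv.1,
         le_trans hv.2 (le_of_lt (lt_of_lt_of_le hbs (min_le_left _ _)))⟩
      obtain ⟨y, hyK, hyd⟩ := him hv'
      by_cases hyZ : y ∈ Z
      · exact ⟨y, ⟨hyK, hyZ⟩, hyd⟩
      · have hyd' : dist y (z : Y) = v := hyd
        exact absurd (by rw [hyd']; exact hv) (hKZ y ⟨hyK, hyZ⟩)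
    have hcnt : (Icc a b).Countable :=
      ((hZc.mono inter_subset_right).image _).mono hsub
    have := hcnt.le_aleph0
    rw [Cardinal.mk_Icc_real hab] at this
    exact absurd this Cardinal.aleph0_lt_continuum.not_ge
  choose y hy1 hy2 hy3 using hseq
  have htend : Filter.Tendsto (fun n => gr Z (y n)) atTop (𝓝 ((z : Y), q)) := by
    unfold gr
    apply Filter.Tendsto.prodMk_nhds
    · rw [tendsto_iff_dist_tendsto_zero]
      exact squeeze_zero (fun n => dist_nonneg) (fun n => le_of_lt (hy2 n))
        tendsto_one_div_add_atTop_nhds_zero_nat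
    · rw [tendsto_pi_nhds]
      intro z'
      rcases eq_or_ne z' z with rfl | hne
      · rw [tendsto_subtype_rng]
        have : ∀ n, dist (psi (dist (y n) (z' : Y))) ((q z' : ℝ)) ≤ 1 / (n + 1) := by
          intro n; rw [Real.dist_eq]; exact hy3 n
        rw [tendsto_iff_dist_tendsto_zero]
        exact squeeze_zero (fun n => dist_nonneg) this
          tendsto_one_div_add_atTop_nhds_zero_nat
      · have hne' : (z' : Y) ≠ (z : Y) := fun h => hne (Subtype.ext h)
        have htd : Filter.Tendsto (fun n => y n) atTop (𝓝 (z : Y)) := by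
          rw [tendsto_iff_dist_tendsto_zero]
          exact squeeze_zero (fun n => dist_nonneg) (fun n => le_of_lt (hy2 n))
            tendsto_one_div_add_atTop_nhds_zero_nat
        have := (phi_contAt Z z' hne'.symm).tendsto.comp htd
        rw [← hq z' hne'] at this
        exact this
  exact mem_closure_of_tendsto htend
    (Filter.Eventually.of_forall (fun n => mem_image_of_mem _ (hy1 n)))

/-- the projection map -/
noncomputable def fm (Z : Set Y) : ↥(Xs Z) → Y := fun x => x.1.1

lemma fm_cont (Z : Set Y) : Continuous (fm Z) :=
  continuous_fst.comp continuous_subtype_val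

open Classical in
/-- points in the fiber over `z ∈ Z` -/
noncomputable def pt (Z : Set Y) (z : Z) (t : unitInterval) : Y × (Z → unitInterval) :=
  ((z : Y), Function.update (phi Z (z : Y)) z t)

lemma pt_mem [ConnectedSpace Y] [Nontrivial Y] {Z : Set Y} (hZc : Z.Countable) (z : Z)
    (t : unitInterval) : pt Z z t ∈ Xs Z := by
  classical
  have h := key hZc isPreconnected_univ nontrivial_univ z (mem_univ _)
    (Function.update (phi Z (z : Y)) z t)
    (fun z' hz' => Function.update_of_ne (fun e => hz' (by rw [e])) _ _)
  rw [Xs, Set.compl_eq_univ_diff]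
  exact h

lemma mem_of_fst_notMem {Z : Set Y} (hZc : Z.Countable) {p : Y × (Z → unitInterval)}
    (hp : p ∈ Xs Z) (h1 : p.1 ∉ Z) : p = gr Z p.1 := by
  refine Prod.ext rfl ?_
  funext z
  exact snd_eq hZc hp z (fun e => h1 (e ▸ z.2))

lemma mem_of_fst_mem {Z : Set Y} (hZc : Z.Countable) {p : Y × (Z → unitInterval)}
    (hp : p ∈ Xs Z) (z : Z) (h1 : p.1 = (z : Y)) : p = pt Z z (p.2 z) := by
  classical
  refine Prod.ext h1 ?_
  funext z'
  rcases eq_or_ne z' z with rfl | hne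
  · rw [pt]; simp only [Function.update_self]
  · rw [pt]; simp only [Function.update_of_ne hne]
    rw [snd_eq hZc hp z' (by rw [h1]; exact fun e => hne (Subtype.ext e.symm)), h1]

lemma fm_surj [ConnectedSpace Y] [Nontrivial Y] {Z : Set Y} (hZc : Z.Countable) :
    Function.Surjective (fm Z) := by
  intro y
  by_cases hy : y ∈ Z
  · exact ⟨⟨pt Z ⟨y, hy⟩ 0, pt_mem hZc _ 0⟩, rfl⟩
  · exact ⟨⟨gr Z y, subset_closure (mem_image_of_mem _ hy)⟩, rfl⟩

lemma fiber_notMem {Z : Set Y} (hZc : Z.Countable) {y : Y} (hy : y ∉ Z)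
    (hmem : gr Z y ∈ Xs Z) : fm Z ⁻¹' {y} = {⟨gr Z y, hmem⟩} := by
  ext x
  simp only [mem_preimage, mem_singleton_iff]
  constructor
  · intro hx
    apply Subtype.ext
    have := mem_of_fst_notMem hZc x.2 (by rwa [show x.1.1 = y from hx])
    rw [this, show x.1.1 = y from hx]
  · intro hx; rw [hx]; rfl

lemma fiber_mem [ConnectedSpace Y] [Nontrivial Y] {Z : Set Y} (hZc : Z.Countable) (z : Z) :
    fm Z ⁻¹' {(z : Y)} =
      Set.range (fun t : unitInterval => (⟨pt Z z t, pt_mem hZc z t⟩ : ↥(Xs Z))) := by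
  ext x
  simp only [mem_preimage, mem_singleton_iff, mem_range]
  constructor
  · intro hx
    exact ⟨x.1.2 z, Subtype.ext (mem_of_fst_mem hZc x.2 z hx).symm⟩
  · rintro ⟨t, rfl⟩; rfl

lemma pt_cont [ConnectedSpace Y] [Nontrivial Y] {Z : Set Y} (hZc : Z.Countable) (z : Z) :
    Continuous (fun t : unitInterval => (⟨pt Z z t, pt_mem hZc z t⟩ : ↥(Xs Z))) := by
  classical
  apply Continuous.subtype_mk
  apply Continuous.prodMk continuous_const
  exact continuous_const.update z continuous_id

lemma fiber_conn_mem [ConnectedSpace Y] [Nontrivial Y] {Z : Set Y} (hZc : Z.Countable)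
    (z : Z) : IsConnected (fm Z ⁻¹' {(z : Y)}) := by
  rw [fiber_mem hZc z]
  exact isConnected_range (pt_cont hZc z)

lemma fiber_conn [ConnectedSpace Y] [Nontrivial Y] {Z : Set Y} (hZc : Z.Countable)
    (y : Y) : IsConnected (fm Z ⁻¹' {y}) := by
  by_cases hy : y ∈ Z
  · exact fiber_conn_mem hZc ⟨y, hy⟩
  · rw [fiber_notMem hZc hy (subset_closure (mem_image_of_mem _ hy))]
    exact isConnected_singleton

/-- generic connectedness from monotone surjections -/
lemma conn_of_fibers {A B : Type*} [TopologicalSpace A] [TopologicalSpace B]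
    [CompactSpace A] [T2Space B] [ConnectedSpace B] (f : A → B) (hf : Continuous f)
    (hsurj : Function.Surjective f) (hfib : ∀ b, IsPreconnected (f ⁻¹' {b})) :
    ConnectedSpace A := by
  have hne : Nonempty A := by
    obtain ⟨a, -⟩ := hsurj (Classical.choice (inferInstance : Nonempty B))
    exact ⟨a⟩
  suffices h : IsPreconnected (Set.univ : Set A) by
    exact { toPreconnectedSpace := ⟨h⟩, toNonempty := hne }
  rw [isPreconnected_iff_subset_of_disjoint]
  intro u v hu hv hcov hdisj
  -- u v disjoint open cover
  have hvc : v = uᶜ := by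
    apply Set.eq_of_subset_of_subset
    · intro x hx hxu
      exact absurd (show x ∈ (Set.univ : Set A) ∩ (u ∩ v) from ⟨trivial, hxu, hx⟩)
        (by rw [hdisj]; exact notMem_empty x)
    · intro x hx
      rcases hcov (mem_univ x) with h | h
      · exact absurd h hx
      · exact h
  have hucl : IsClosed u := by rw [← compl_compl u, ← hvc]; exact hv.isClosed_compl
  have hvcl : IsClosed v := by rw [hvc]; exact hu.isClosed_compl
  have hdisj' : Disjoint u v := by
    rw [Set.disjoint_iff_inter_eq_empty]
    rwa [Set.univ_inter] at hdisj
  have hfib' : ∀ b, f ⁻¹' {b} ⊆ u ∨ f ⁻¹' {b} ⊆ v := fun b =>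
    (hfib b).subset_or_subset hu hv hdisj' (by intro x _; exact hcov (mem_univ x))
  have himdisj : Disjoint (f '' u) (f '' v) := by
    rw [Set.disjoint_left]
    rintro b ⟨a, hau, rfl⟩ ⟨a', ha'v, ha'e⟩
    rcases hfib' (f a) with h | h
    · exact absurd (h (show a' ∈ f ⁻¹' {f a} from ha'e)) fun hc =>
        (Set.disjoint_left.1 hdisj' hc) ha'v
    · exact absurd (h (show a ∈ f ⁻¹' {f a} from rfl)) fun hc =>
        (Set.disjoint_left.1 hdisj' hau) hc
  have hucomp : IsClosed (f '' u) := (hucl.isCompact.image hf).isClosed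
  have hvcomp : IsClosed (f '' v) := (hvcl.isCompact.image hf).isClosed
  have hcov' : f '' u ∪ f '' v = Set.univ := by
    apply Set.eq_univ_of_forall
    intro b
    obtain ⟨a, rfl⟩ := hsurj b
    rcases hcov (mem_univ a) with h | h
    · exact Or.inl (mem_image_of_mem _ h)
    · exact Or.inr (mem_image_of_mem _ h)
  have hclopen : IsClopen (f '' u) := by
    refine ⟨hucomp, ?_⟩
    have : f '' u = (f '' v)ᶜ := by
      apply Set.eq_of_subset_of_subset
      · exact Set.subset_compl_iff_disjoint_right.2 himdisj
      · intro b hb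
        rcases Set.eq_univ_iff_forall.1 hcov' b |>.elim id (fun h => absurd h hb) with h
        · exact Set.mem_union b _ _ |>.mp (hcov' ▸ mem_univ b) |>.elim id
            (fun h' => absurd h' hb)
    rw [this]
    exact hvcomp.isOpen_compl
  rcases isClopen_iff.1 hclopen with h | h
  · right
    intro a _
    rcases hcov (mem_univ a) with hau | hav
    · exact absurd (mem_image_of_mem f hau) (by rw [h]; exact notMem_empty _)
    · exact hav
  · left
    intro a _
    rcases hcov (mem_univ a) with hau | hav
    · exact hau
    · exfalso
      have h2 : f a ∈ f '' v := mem_image_of_mem f hav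
      exact Set.disjoint_left.1 himdisj (by rw [h]; exact mem_univ _) h2

lemma irr [CompactSpace Y] {Z : Set Y} (hZc : Z.Countable) {K : Set Y}
    (hKconn : IsPreconnected K) (hKnt : K.Nontrivial) {A : Set ↥(Xs Z)} (hA : IsClosed A)
    (him : fm Z '' A = K) : fm Z ⁻¹' K ⊆ A := by
  haveI : CompactSpace ↥(Xs Z) :=
    isCompact_iff_compactSpace.mp (isClosed_closure (s := gr Z '' Zᶜ)).isCompact
  intro x hx
  have hvalA : IsClosed (Subtype.val '' A : Set (Y × (Z → unitInterval))) :=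
    (hA.isCompact.image continuous_subtype_val).isClosed
  by_cases hxZ : x.1.1 ∈ Z
  · set z : Z := ⟨x.1.1, hxZ⟩ with hzd
    have h1 : ((z : Y), x.1.2) ∈ closure (gr Z '' (K \ Z)) :=
      key hZc hKconn hKnt z hx x.1.2
        (fun z' hz' => snd_eq hZc x.2 z' (fun e => hz' e.symm))
    have h2 : gr Z '' (K \ Z) ⊆ Subtype.val '' A := by
      rintro _ ⟨w, ⟨hwK, hwZ⟩, rfl⟩
      have hw : w ∈ fm Z '' A := him ▸ hwK
      obtain ⟨a, haA, hae⟩ := hw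
      have h3 := mem_of_fst_notMem hZc a.2
        (show a.1.1 ∉ Z by rw [show a.1.1 = w from hae]; exact hwZ)
      rw [show (a.1.1 : Y) = w from hae] at h3
      exact ⟨a, haA, h3⟩
    have h4 : (x : Y × (Z → unitInterval)) ∈ Subtype.val '' A := by
      have h5 := closure_mono h2 h1
      rw [hvalA.closure_eq] at h5
      have h6 : ((z : Y), x.1.2) = (x : Y × (Z → unitInterval)) := Prod.mk.eta
      rwa [h6] at h5
    obtain ⟨a, haA, hae⟩ := h4
    exact (Subtype.ext hae : a = x) ▸ haA
  · rw [← him] at hx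
    obtain ⟨a, haA, hae⟩ := hx
    have h1 := mem_of_fst_notMem hZc a.2 (show a.1.1 ∉ Z by rw [show a.1.1 = x.1.1 from hae]; exact hxZ)
    have h2 := mem_of_fst_notMem hZc x.2 hxZ
    have : a = x := by
      apply Subtype.ext
      rw [h1, h2, show (a.1.1 : Y) = x.1.1 from hae]
    exact this ▸ haA

lemma fiber_homeo [CompactSpace Y] [ConnectedSpace Y] [Nontrivial Y] {Z : Set Y}
    (hZc : Z.Countable) (z : Z) :
    Nonempty (↥(fm Z ⁻¹' {(z : Y)}) ≃ₜ unitInterval) := by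
  classical
  haveI : CompactSpace ↥(Xs Z) :=
    isCompact_iff_compactSpace.mp (isClosed_closure (s := gr Z '' Zᶜ)).isCompact
  haveI : CompactSpace ↥(fm Z ⁻¹' {(z : Y)}) := isCompact_iff_compactSpace.mp
    ((isClosed_singleton.preimage (fm_cont Z)).isCompact)
  set e : ↥(fm Z ⁻¹' {(z : Y)}) → unitInterval := fun w => w.1.1.2 z with he
  have hcont : Continuous e := (continuous_apply z).comp
    (continuous_snd.comp (continuous_subtype_val.comp continuous_subtype_val))
  have hbij : Function.Bijective e := by
    constructor
    · rintro ⟨w, hw⟩ ⟨w', hw'⟩ h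
      apply Subtype.ext; apply Subtype.ext
      rw [mem_preimage, mem_singleton_iff] at hw hw'
      have h1 := mem_of_fst_mem hZc w.2 z hw
      have h2 := mem_of_fst_mem hZc w'.2 z hw'
      rw [h1, h2]
      simp only [e] at h
      rw [h]
    · intro t
      refine ⟨⟨⟨pt Z z t, pt_mem hZc z t⟩, rfl⟩, ?_⟩
      simp only [e, pt]
      exact Function.update_self _ _ _
  exact ⟨Continuous.homeoOfEquivCompactToT2 (f := Equiv.ofBijective e hbij) hcont⟩

lemma suslinianX [CompactSpace Y] [ConnectedSpace Y] [Nontrivial Y] {Z : Set Y}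
    (hZc : Z.Countable)
    (hY : ∀ 𝒞 : Set (Set Y), (∀ C ∈ 𝒞, IsCompact C ∧ IsConnected C ∧ C.Nontrivial) →
      𝒞.PairwiseDisjoint id → 𝒞.Countable)
    (𝒞 : Set (Set ↥(Xs Z))) (h𝒞 : ∀ C ∈ 𝒞, IsCompact C ∧ IsConnected C ∧ C.Nontrivial)
    (hdisj : 𝒞.PairwiseDisjoint id) : 𝒞.Countable := by
  classical
  haveI : CompactSpace ↥(Xs Z) :=
    isCompact_iff_compactSpace.mp (isClosed_closure (s := gr Z '' Zᶜ)).isCompact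
  have hfull : ∀ C ∈ 𝒞, (fm Z '' C).Nontrivial → C = fm Z ⁻¹' (fm Z '' C) := by
    intro C hC hnt
    obtain ⟨hcomp, hconn, -⟩ := h𝒞 C hC
    exact Set.Subset.antisymm (subset_preimage_image _ _)
      (irr hZc (hconn.image _ (fm_cont Z).continuousOn).isPreconnected hnt hcomp.isClosed rfl)
  have hinj : ∀ (z : Z), Set.InjOn (fun x : ↥(Xs Z) => ((x.1.2 z : ℝ)))
      (fm Z ⁻¹' {(z : Y)}) := by
    intro z w hw w' hw' h
    apply Subtype.ext
    rw [mem_preimage, mem_singleton_iff] at hw hw'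
    rw [mem_of_fst_mem hZc w.2 z hw, mem_of_fst_mem hZc w'.2 z hw']
    congr 1
    exact Subtype.ext h
  set S1 := {C | C ∈ 𝒞 ∧ (fm Z '' C).Nontrivial} with hS1d
  set S2 := {C | C ∈ 𝒞 ∧ ¬(fm Z '' C).Nontrivial} with hS2d
  have hsplit : 𝒞 = S1 ∪ S2 := by
    ext C
    simp only [hS1d, hS2d, mem_union, mem_setOf_eq]
    tauto
  have himg : ((fun C => fm Z '' C) '' S1).Countable := by
    apply hY
    · rintro D ⟨C, hCS, rfl⟩
      obtain ⟨hcomp, hconn, -⟩ := h𝒞 C hCS.1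
      exact ⟨hcomp.image (fm_cont Z), hconn.image _ (fm_cont Z).continuousOn, hCS.2⟩
    · rintro D₁ ⟨C₁, hC₁, rfl⟩ D₂ ⟨C₂, hC₂, rfl⟩ hne
      have hCne : C₁ ≠ C₂ := fun h => hne (by rw [h])
      have hCd : Disjoint C₁ C₂ := hdisj hC₁.1 hC₂.1 hCne
      simp only [Function.onFun, id_eq]
      rw [Set.disjoint_left]
      intro y hy₁ hy₂
      obtain ⟨x₁, hx₁, rfl⟩ := hy₁
      have hx₂ : x₁ ∈ C₂ := by
        rw [hfull C₂ hC₂.1 hC₂.2]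
        exact mem_preimage.2 hy₂
      exact Set.disjoint_left.1 hCd hx₁ hx₂
  have hS1 : S1.Countable := Set.countable_of_injective_of_countable_image
    (fun C hC C' hC' h => by
      rw [hfull C hC.1 hC.2]
      rw [show fm Z '' C = fm Z '' C' from h]
      rw [← hfull C' hC'.1 hC'.2]) himg
  have hTz : ∀ z ∈ Z, {C | C ∈ 𝒞 ∧ C.Nontrivial ∧ C ⊆ fm Z ⁻¹' {z}}.Countable := by
    intro z hz
    set T := {C | C ∈ 𝒞 ∧ C.Nontrivial ∧ C ⊆ fm Z ⁻¹' {z}} with hTd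
    set ρ : ↥(Xs Z) → ℝ := fun x => ((x.1.2 ⟨z, hz⟩ : ℝ)) with hρd
    have hρc : Continuous ρ := continuous_subtype_val.comp
      ((continuous_apply _).comp (continuous_snd.comp continuous_subtype_val))
    have hexq : ∀ C ∈ T, ∃ q : ℚ, ∃ x ∈ C, ρ x = q := by
      intro C hC
      obtain ⟨hC𝒞, hCnt, hCsub⟩ := hC
      obtain ⟨-, hconn, -⟩ := h𝒞 C hC𝒞
      have himnt : (ρ '' C).Nontrivial := by
        obtain ⟨x, hx, x', hx', hxx⟩ := hCnt
        refine ⟨ρ x, mem_image_of_mem _ hx, ρ x', mem_image_of_mem _ hx', ?_⟩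
        intro h
        exact hxx (hinj ⟨z, hz⟩ (hCsub hx) (hCsub hx') h)
      obtain ⟨a, ha, b, hb, hab⟩ := himnt
      have hpc : IsPreconnected (ρ '' C) :=
        (hconn.image ρ hρc.continuousOn).isPreconnected
      rcases lt_or_gt_of_ne hab with hlt | hlt
      · obtain ⟨q, hq1, hq2⟩ := exists_rat_btwn hlt
        obtain ⟨x, hx, hxe⟩ := hpc.Icc_subset ha hb ⟨le_of_lt hq1, le_of_lt hq2⟩
        exact ⟨q, x, hx, hxe⟩
      · obtain ⟨q, hq1, hq2⟩ := exists_rat_btwn hlt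
        obtain ⟨x, hx, hxe⟩ := hpc.Icc_subset hb ha ⟨le_of_lt hq1, le_of_lt hq2⟩
        exact ⟨q, x, hx, hxe⟩
    haveI : Countable ↥T := by
      have hch := fun (C : ↥T) => hexq C.1 C.2
      choose q x hx hq using hch
      refine Function.Injective.countable (f := q) ?_
      intro C C' h
      apply Subtype.ext
      have hxx : x C = x C' := by
        apply hinj ⟨z, hz⟩ (C.2.2.2 (hx C)) (C'.2.2.2 (hx C'))
        show ρ (x C) = ρ (x C')
        rw [hq C, hq C', h]
      apply hdisj.elim C.2.1 C'.2.1
      apply Set.not_disjoint_iff.2 ⟨x C, hx C, hxx ▸ hx C'⟩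
    exact Set.countable_coe_iff.mp this
  have hS2 : S2.Countable := by
    apply Set.Countable.mono ?_ (hZc.biUnion hTz)
    intro C hC
    obtain ⟨hcomp, hconn, hnt⟩ := h𝒞 C hC.1
    have hsing : (fm Z '' C).Subsingleton := Set.not_nontrivial_iff.1 hC.2
    obtain ⟨x0, hx0⟩ := hconn.nonempty
    set y := fm Z x0 with hyd
    have hsub2 : C ⊆ fm Z ⁻¹' {y} := fun x hx =>
      hsing (mem_image_of_mem _ hx) (mem_image_of_mem _ hx0)
    have hyZ : y ∈ Z := by
      by_contra hyZ
      have hfib := fiber_notMem hZc hyZ (subset_closure (mem_image_of_mem _ hyZ))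
      rw [hfib] at hsub2
      exact hnt.not_subsingleton (Set.subsingleton_of_subset_singleton hsub2)
    exact mem_biUnion hyZ ⟨hC.1, hnt, hsub2⟩
  rw [hsplit]
  exact hS1.union hS2

end Stmt16Aux

/-- For every non-degenerate metrizable Suslinian continuum `Y` and every
countable `Z ⊆ Y` there are a metrizable Suslinian continuum `X` and an `I`-atomic
continuous surjection `f : X → Y` whose non-degeneracy set equals `Z`. -/
theorem stmt_16 (Y : Type u) [TopologicalSpace Y] [CompactSpace Y] [T2Space Y]
    [ConnectedSpace Y] [Nontrivial Y] [MetrizableSpace Y] (hY : IsSuslinianSpace Y)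
    (Z : Set Y) (hZ : Z.Countable) :
    ∃ (X : Type u) (_ : TopologicalSpace X), CompactSpace X ∧ T2Space X ∧
      ConnectedSpace X ∧ MetrizableSpace X ∧ IsSuslinianSpace X ∧
      ∃ f : X → Y, Continuous f ∧ Function.Surjective f ∧ IsIAtomicMap f ∧
        {y : Y | (f ⁻¹' {y}).Nontrivial} = Z := by
  letI : MetricSpace Y := TopologicalSpace.metrizableSpaceMetric Y
  classical
  haveI := hZ.to_subtype
  haveI hcX : CompactSpace ↥(Stmt16Aux.Xs Z) :=
    isCompact_iff_compactSpace.mp (isClosed_closure (s := Stmt16Aux.gr Z '' Zᶜ)).isCompact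
  haveI hQm : TopologicalSpace.MetrizableSpace (↥Z → unitInterval) :=
    UniformSpace.metrizableSpace
  refine ⟨↥(Stmt16Aux.Xs Z), inferInstance, inferInstance, inferInstance, ?_, inferInstance, ?_,
    Stmt16Aux.fm Z, Stmt16Aux.fm_cont Z, Stmt16Aux.fm_surj hZ, ⟨⟨?_, ?_⟩, ?_⟩, ?_⟩
  · exact Stmt16Aux.conn_of_fibers (Stmt16Aux.fm Z) (Stmt16Aux.fm_cont Z) (Stmt16Aux.fm_surj hZ)
      (fun b => (Stmt16Aux.fiber_conn hZ b).isPreconnected)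
  · exact fun 𝒞 h𝒞 hd => Stmt16Aux.suslinianX hZ hY 𝒞 h𝒞 hd
  · exact fun y => Stmt16Aux.fiber_conn hZ y
  · intro K hKcomp hKconn hKnt A hA hA2 him
    exact Set.Subset.antisymm hA2 (Stmt16Aux.irr hZ hKconn.isPreconnected hKnt hA him)
  · intro y
    by_cases hy : y ∈ Z
    · exact Or.inr (Stmt16Aux.fiber_homeo hZ ⟨y, hy⟩)
    · exact Or.inl ⟨_, Stmt16Aux.fiber_notMem hZ hy (subset_closure (mem_image_of_mem _ hy))⟩
  · ext y
    simp only [mem_setOf_eq]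
    constructor
    · intro h
      by_contra hyZ
      rw [Stmt16Aux.fiber_notMem hZ hyZ (subset_closure (mem_image_of_mem _ hyZ))] at h
      exact Set.not_nontrivial_singleton h
    · intro hy
      refine ⟨⟨Stmt16Aux.pt Z ⟨y, hy⟩ 0, Stmt16Aux.pt_mem hZ _ _⟩, rfl,
        ⟨Stmt16Aux.pt Z ⟨y, hy⟩ 1, Stmt16Aux.pt_mem hZ _ _⟩, rfl, ?_⟩
      intro h
      have h2 := congrArg (fun w : ↥(Stmt16Aux.Xs Z) => ((w.1.2 ⟨y, hy⟩ : ℝ))) h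
      simp only [Stmt16Aux.pt, Function.update_self] at h2
      norm_num at h2
end
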